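/- If supp(φ) ⊂ S for an admissible set S, then P_S ∘ P_φ = P_φ. -/

import Mathlib

open MeasureTheory VectorFourier Filter Topology

noncomputable section

/-- The properties of Schwartz–Bruhat functions that are used: continuity, integrability,
integrability of the Fourier transform (with respect to the character `e`, the bilinear
form `L` and the measure `m`), and Fourier inversion (self-dual normalization of `m`). -/
structure IsSB {𝕜 : Type*} [CommRing 𝕜] {V : Type*} [AddCommGroup V] [Module 𝕜 V]
    [TopologicalSpace V] [MeasurableSpace V]
    (e : AddChar 𝕜 Circle) (m : Measure V) (L : V →ₗ[𝕜] V →ₗ[𝕜] 𝕜) (φ : V → ℂ) : Prop where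
  cont : Continuous φ
  integrable : Integrable φ m
  fourier_integrable : Integrable (fourierIntegral e m L φ) m
  inversion : ∀ v, fourierIntegral e m L (fourierIntegral e m L φ) (-v) = φ v

/-- The operator `P_φ f = ∫_V φ̂(v) • σ(v) f dm(v)` (Bochner integral). -/
def Pop {𝕜 : Type*} [CommRing 𝕜] {V : Type*} [AddCommGroup V] [Module 𝕜 V] [MeasurableSpace V]
    {H : Type*} [NormedAddCommGroup H] [NormedSpace ℂ H]
    (e : AddChar 𝕜 Circle) (m : Measure V) (L : V →ₗ[𝕜] V →ₗ[𝕜] 𝕜)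
    (σ : V → H →L[ℂ] H) (φ : V → ℂ) (f : H) : H :=
  ∫ v, fourierIntegral e m L φ v • σ v f ∂m

/-! Each `ω_n` equals `1` on the support of `φ`, so `ω_n φ = φ`. The operators compose as the
functions multiply, `P_ω ∘ P_φ = P_{ωφ}`: since `σ` turns translation into composition,
`P_ω (P_φ f) = ∫ (ω̂ ⋆ φ̂)(x) • σ(x) f dm(x)`, and by Fourier inversion for `ω` the convolution
`ω̂ ⋆ φ̂` is the transform of `ωφ`. Hence `P_{ω_n} (P_φ f) = P_φ f` for every `n`, and passing
to the strong limit gives `P_S (P_φ f) = P_φ f`. -/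

open scoped Convolution

section

variable {𝕜 : Type*} [CommRing 𝕜] {V : Type*} [AddCommGroup V] [Module 𝕜 V] [TopologicalSpace V]
  [MeasurableSpace V] {e : AddChar 𝕜 Circle} {m : Measure V} {L : V →ₗ[𝕜] V →ₗ[𝕜] 𝕜}

theorem integral_char_mul_fourierIntegral (hLsymm : ∀ v w, L v w = L w v) {ω : V → ℂ}
    (hω : IsSB e m L ω) (u : V) :
    ∫ v, (e (L u v) : ℂ) * fourierIntegral e m L ω v ∂m = ω u := by
  rw [← hω.inversion u]
  refine integral_congr_ae (Eventually.of_forall fun v => ?_)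
  simp only [map_neg, neg_neg, Circle.smul_def, smul_eq_mul, hLsymm v u]

theorem fourierIntegral_mul_eq_convolution [TopologicalSpace 𝕜] [IsTopologicalRing 𝕜]
    [SecondCountableTopology V] [BorelSpace V] [SFinite m] (he : Continuous e)
    (hL : Continuous fun p : V × V => L p.1 p.2) (hLsymm : ∀ v w, L v w = L w v)
    {ω φ : V → ℂ} (hω : IsSB e m L ω) (hφ : Integrable φ m) :
    fourierIntegral e m L (ω * φ)
      = fourierIntegral e m L ω ⋆[ContinuousLinearMap.mul ℂ ℂ, m] fourierIntegral e m L φ := by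
  ext w
  let g : V → V → ℂ := fun v u =>
    ((e (L u v) : ℂ) * fourierIntegral e m L ω v) * ((e (-L u w) : ℂ) * φ u)
  have hg : Integrable (Function.uncurry g) (m.prod m) := by
    have hchar : Continuous fun p : V × V => (e (L p.2 p.1) : ℂ) * (e (-L p.2 w) : ℂ) := by
      fun_prop
    have hg_eq : Function.uncurry g = fun p : V × V =>
        ((e (L p.2 p.1) : ℂ) * (e (-L p.2 w) : ℂ)) * (fourierIntegral e m L ω p.1 * φ p.2) := by
      ext ⟨v, u⟩
      simp only [g, Function.uncurry_apply_pair]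
      ring
    refine Integrable.mono' (hω.fourier_integrable.norm.mul_prod hφ.norm) ?_
      (Eventually.of_forall fun ⟨v, u⟩ => by simp [g, Circle.norm_coe])
    rw [hg_eq]
    exact hchar.aestronglyMeasurable.mul
      (hω.fourier_integrable.1.comp_fst.mul hφ.1.comp_snd)
  calc fourierIntegral e m L (ω * φ) w
      = ∫ u, (∫ v, (e (L u v) : ℂ) * fourierIntegral e m L ω v ∂m)
          * ((e (-L u w) : ℂ) * φ u) ∂m := by
        refine integral_congr_ae (Eventually.of_forall fun u => ?_)
        dsimp only
        rw [integral_char_mul_fourierIntegral hLsymm hω, Circle.smul_def, Pi.mul_apply,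
          smul_eq_mul, mul_left_comm]
    _ = ∫ u, ∫ v, g v u ∂m ∂m := by simp only [g, integral_mul_const]
    _ = ∫ v, ∫ u, g v u ∂m ∂m := (integral_integral_swap hg).symm
    _ = (fourierIntegral e m L ω ⋆[ContinuousLinearMap.mul ℂ ℂ, m]
          fourierIntegral e m L φ) w := by
        rw [convolution_def]
        refine integral_congr_ae (Eventually.of_forall fun v => ?_)
        have hF : fourierIntegral e m L φ (w - v) = ∫ u, e (-L u (w - v)) • φ u ∂m := rfl
        dsimp only
        rw [ContinuousLinearMap.mul_apply', hF, ← integral_const_mul]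
        refine integral_congr_ae (Eventually.of_forall fun u => ?_)
        have hchar : e (-L u (w - v)) = e (L u v) * e (-L u w) := by
          rw [map_sub, neg_sub, sub_eq_add_neg, AddChar.map_add_eq_mul]
        simp only [g, hchar, Circle.smul_def, smul_eq_mul, Circle.coe_mul]
        ring

variable [IsTopologicalAddGroup V] [SecondCountableTopology V] [BorelSpace V]
  [m.IsAddRightInvariant] {H : Type*} [NormedAddCommGroup H] [NormedSpace ℂ H] [CompleteSpace H]
  {σ : V → H →L[ℂ] H}

theorem apply_Pop_eq_integral_sub (hσadd : ∀ v w, σ (v + w) = (σ v).comp (σ w))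
    (hσunit : ∀ v f, ‖σ v f‖ = ‖f‖) (hσcont : ∀ f : H, Continuous fun v => σ v f)
    {φ : V → ℂ} (hφ : IsSB e m L φ) (v : V) (f : H) :
    σ v (Pop e m L σ φ f) = ∫ x, fourierIntegral e m L φ (x - v) • σ x f ∂m := by
  have hint : Integrable (fun x => fourierIntegral e m L φ x • σ x f) m :=
    hφ.fourier_integrable.smul_bdd ‖f‖ (hσcont f).aestronglyMeasurable
      (ae_of_all _ fun x => (hσunit x f).le)
  calc σ v (Pop e m L σ φ f)
      = ∫ x, fourierIntegral e m L φ x • σ (v + x) f ∂m := by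
        rw [Pop, ← (σ v).integral_comp_comm hint]
        simp only [map_smul, hσadd, ContinuousLinearMap.comp_apply]
    _ = ∫ x, fourierIntegral e m L φ (x - v) • σ x f ∂m := by
        rw [← integral_sub_right_eq_self _ v]
        simp only [add_sub_cancel]

theorem Pop_Pop_eq_Pop_mul [TopologicalSpace 𝕜] [IsTopologicalRing 𝕜] [SFinite m]
    (he : Continuous e) (hL : Continuous fun p : V × V => L p.1 p.2)
    (hLsymm : ∀ v w, L v w = L w v) (hσadd : ∀ v w, σ (v + w) = (σ v).comp (σ w))
    (hσunit : ∀ v f, ‖σ v f‖ = ‖f‖) (hσcont : ∀ f : H, Continuous fun v => σ v f)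
    {ω φ : V → ℂ} (hω : IsSB e m L ω) (hφ : IsSB e m L φ) (f : H) :
    Pop e m L σ ω (Pop e m L σ φ f) = Pop e m L σ (ω * φ) f := by
  have hint : Integrable (Function.uncurry fun x v =>
      (fourierIntegral e m L ω v * fourierIntegral e m L φ (x - v)) • σ x f) (m.prod m) :=
    (hω.fourier_integrable.convolution_integrand (ContinuousLinearMap.mul ℂ ℂ)
      hφ.fourier_integrable (μ := m)).smul_bdd ‖f‖
        ((hσcont f).comp continuous_fst).aestronglyMeasurable
        (ae_of_all _ fun p => (hσunit p.1 f).le)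
  calc Pop e m L σ ω (Pop e m L σ φ f)
      = ∫ v, ∫ x, (fourierIntegral e m L ω v * fourierIntegral e m L φ (x - v)) • σ x f ∂m ∂m := by
        refine integral_congr_ae (Eventually.of_forall fun v => ?_)
        simp only [apply_Pop_eq_integral_sub hσadd hσunit hσcont hφ, ← integral_smul, smul_smul]
    _ = ∫ x, ∫ v, (fourierIntegral e m L ω v * fourierIntegral e m L φ (x - v)) • σ x f ∂m ∂m :=
        (integral_integral_swap hint).symm
    _ = ∫ x, (fourierIntegral e m L ω ⋆[ContinuousLinearMap.mul ℂ ℂ, m]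
          fourierIntegral e m L φ) x • σ x f ∂m := by
        simp only [integral_smul_const, convolution_def, ContinuousLinearMap.mul_apply']
    _ = Pop e m L σ (ω * φ) f := by
        rw [Pop, fourierIntegral_mul_eq_convolution he hL hLsymm hω hφ.integrable]

end

theorem mul_eq_right_of_eqOn_support {X M : Type*} [MulZeroOneClass M] {ω φ : X → M}
    (h : Set.EqOn ω 1 (Function.support φ)) : ω * φ = φ := by
  funext u
  by_cases hu : φ u = 0
  · simp [hu]
  · simp [h hu]

theorem statement9_general {𝕜 : Type*} [NontriviallyNormedField 𝕜] [CompleteSpace 𝕜]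
    [LocallyCompactSpace 𝕜]
    {V : Type*} [NormedAddCommGroup V] [NormedSpace 𝕜 V] [FiniteDimensional 𝕜 V]
    [MeasurableSpace V] [BorelSpace V]
    {H : Type*} [NormedAddCommGroup H] [InnerProductSpace ℂ H] [CompleteSpace H]
    (e : AddChar 𝕜 Circle) (hecont : Continuous e)
    (m : Measure V) [m.IsAddHaarMeasure]
    (L : V →ₗ[𝕜] V →ₗ[𝕜] 𝕜) (hLsymm : ∀ v w, L v w = L w v)
    (σ : V → H →L[ℂ] H)
    (hσadd : ∀ v w, σ (v + w) = (σ v).comp (σ w))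
    (hσunit : ∀ v f, ‖σ v f‖ = ‖f‖) (hσcont : ∀ f : H, Continuous fun v => σ v f)
    (S : Set V)
    (φ : V → ℂ) (hφ : IsSB e m L φ) (hφS : tsupport φ ⊆ S)
    (ωk : ℕ → V → ℝ)
    (hωSB : ∀ n, IsSB e m L fun v => ((ωk n v : ℝ) : ℂ))
    (hωone : ∀ n, ∀ u ∈ S, ωk n u = 1)
    (PS : H → H)
    (hPS : ∀ f : H,
      Tendsto (fun n => Pop e m L σ (fun v => ((ωk n v : ℝ) : ℂ)) f) atTop (𝓝 (PS f))) :
    ∀ f : H, PS (Pop e m L σ φ f) = Pop e m L σ φ f := by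
  intro f
  -- provides second countability of `V` and σ-finiteness of `m`
  have : ProperSpace V := FiniteDimensional.proper 𝕜 V
  have hL : Continuous fun p : V × V => L p.1 p.2 := L.toContinuousBilinearMap.continuous₂
  have hfixed : ∀ n, Pop e m L σ (fun v => ((ωk n v : ℝ) : ℂ)) (Pop e m L σ φ f)
      = Pop e m L σ φ f := fun n => by
    rw [Pop_Pop_eq_Pop_mul hecont hL hLsymm hσadd hσunit hσcont (hωSB n) hφ,
      mul_eq_right_of_eqOn_support fun u hu => ?_]
    simp [hωone n u (hφS (subset_tsupport φ hu))]
  exact tendsto_nhds_unique (hPS _) (by simp only [hfixed, tendsto_const_nhds])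

/-- If `supp φ ⊆ S` for an admissible set `S`, then `P_S ∘ P_φ = P_φ`,
where `P_S` is the strong limit of the `P_{ω_k}` for Schwartz `ω_k`
decreasing to the characteristic function of `S`. -/
theorem statement9 {𝕜 : Type*} [NontriviallyNormedField 𝕜] [CompleteSpace 𝕜] [CharZero 𝕜]
    [LocallyCompactSpace 𝕜]
    {V : Type*} [NormedAddCommGroup V] [NormedSpace 𝕜 V] [FiniteDimensional 𝕜 V]
    [MeasurableSpace V] [BorelSpace V]
    {H : Type*} [NormedAddCommGroup H] [InnerProductSpace ℂ H] [CompleteSpace H]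
    (e : AddChar 𝕜 Circle) (hecont : Continuous e) (hene : e ≠ 1)
    (m : Measure V) [m.IsAddHaarMeasure]
    (L : V →ₗ[𝕜] V →ₗ[𝕜] 𝕜) (hLsymm : ∀ v w, L v w = L w v)
    (σ : V → H →L[ℂ] H)
    (hσ0 : σ 0 = 1) (hσadd : ∀ v w, σ (v + w) = (σ v).comp (σ w))
    (hσunit : ∀ v f, ‖σ v f‖ = ‖f‖) (hσcont : ∀ f : H, Continuous fun v => σ v f)
    (S : Set V)
    (φ : V → ℂ) (hφ : IsSB e m L φ) (hφS : tsupport φ ⊆ S)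
    (ωk : ℕ → V → ℝ)
    (hωSB : ∀ n, IsSB e m L fun v => ((ωk n v : ℝ) : ℂ))
    (hωanti : ∀ v, Antitone fun n => ωk n v)
    (hωone : ∀ n, ∀ u ∈ S, ωk n u = 1)
    (hωtend : ∀ v, Tendsto (fun n => ωk n v) atTop
      (𝓝 (S.indicator (fun _ => (1 : ℝ)) v)))
    (PS : H → H)
    (hPS : ∀ f : H,
      Tendsto (fun n => Pop e m L σ (fun v => ((ωk n v : ℝ) : ℂ)) f) atTop (𝓝 (PS f))) :
    ∀ f : H, PS (Pop e m L σ φ f) = Pop e m L σ φ f :=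
  statement9_general e hecont m L hLsymm σ hσadd hσunit hσcont S φ hφ hφS ωk hωSB hωone PS hPS
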